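/- Let c, C > 0 with c ≤ C, let L > 0 and y ∈ (0, L), and suppose a, b > 0 solve the linear system a(1 − e^{−Cy}) = b(e^{−cy} − e^{−cL}) and aCe^{−Cy} + bce^{−cy} = 1. Define P(x) = a(1 − e^{−Cx}) for 0 ≤ x ≤ y and P(x) = b(e^{−cx} − e^{−cL}) for y < x ≤ L. Then P is continuous on [0,L], P(0) = P(L) = 0, P ≥ 0, and for every continuous λ : [0,L] → ℝ with c ≤ λ(x) ≤ C, one has P''(x) + λ(x)P'(x) ≤ 0 for all x ≠ y, while the derivative of P jumps by P'(y⁺) − P'(y⁻) = −1 at x = y. -/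

import Mathlib

/-!
Each piece of `P` has the form `α e^{-μx} + β`, for which
`u'' + λ u' = α μ (μ - λ) e^{-μx}`; with `(α, μ) = (-a, C)` on the left and `(b, c)` on the
right this is `≤ 0` exactly because `c ≤ λ ≤ C`. The matching condition makes the two pieces
agree at `y`, and the slope condition says that their derivatives there differ by `-1`.
-/

open Real Set Filter Topology

section Piecewise

variable {f g : ℝ → ℝ} {x y : ℝ}

theorem piecewise_le_eventuallyEq_left (hx : x < y) :
    (fun t => if t ≤ y then f t else g t) =ᶠ[𝓝 x] f := by
  filter_upwards [Iio_mem_nhds hx] with t ht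
  rw [if_pos (le_of_lt ht)]

theorem piecewise_le_eventuallyEq_right (hx : y < x) :
    (fun t => if t ≤ y then f t else g t) =ᶠ[𝓝 x] g := by
  filter_upwards [Ioi_mem_nhds hx] with t ht
  rw [if_neg (not_le.mpr ht)]

theorem derivWithin_Iic_piecewise_le (hf : DifferentiableAt ℝ f y) :
    derivWithin (fun t => if t ≤ y then f t else g t) (Iic y) y = deriv f y := by
  have hEq : EqOn (fun t => if t ≤ y then f t else g t) f (Iic y) := fun t ht => if_pos ht
  rw [derivWithin_congr hEq (hEq self_mem_Iic)]
  exact hf.hasDerivAt.hasDerivWithinAt.derivWithin (uniqueDiffOn_Iic y y self_mem_Iic)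

theorem derivWithin_Ici_piecewise_le (hfg : f y = g y) (hg : DifferentiableAt ℝ g y) :
    derivWithin (fun t => if t ≤ y then f t else g t) (Ici y) y = deriv g y := by
  have hEq : EqOn (fun t => if t ≤ y then f t else g t) g (Ici y) := by
    intro t (ht : y ≤ t)
    rcases ht.eq_or_lt with rfl | hlt
    · exact (if_pos le_rfl).trans hfg
    · exact if_neg (not_le.mpr hlt)
  rw [derivWithin_congr hEq (hEq self_mem_Ici)]
  exact hg.hasDerivAt.hasDerivWithinAt.derivWithin (uniqueDiffOn_Ici y y self_mem_Ici)

end Piecewise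

section ExpAffine

noncomputable def expAffine (α μ β x : ℝ) : ℝ := α * exp (-μ * x) + β

variable (α μ β : ℝ)

theorem hasDerivAt_expAffine (x : ℝ) :
    HasDerivAt (expAffine α μ β) (-(α * μ) * exp (-μ * x)) x := by
  have hlin : HasDerivAt (fun t => -μ * t) (-μ) x := by
    simpa using (hasDerivAt_id x).const_mul (-μ)
  exact ((hlin.exp.const_mul α).add_const β).congr_deriv (by ring)

theorem deriv_expAffine : deriv (expAffine α μ β) = fun x => -(α * μ) * exp (-μ * x) :=
  funext fun x => (hasDerivAt_expAffine α μ β x).deriv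

theorem deriv_deriv_expAffine_add_mul_deriv (lam x : ℝ) :
    deriv (deriv (expAffine α μ β)) x + lam * deriv (expAffine α μ β) x
      = α * μ * (μ - lam) * exp (-μ * x) := by
  have hderiv : (fun x => -(α * μ) * exp (-μ * x)) = expAffine (-(α * μ)) μ 0 :=
    funext fun x => (add_zero _).symm
  rw [deriv_expAffine, hderiv, deriv_expAffine]
  simp only [expAffine]
  ring

theorem deriv_deriv_expAffine_add_mul_deriv_nonpos {lam : ℝ} (h : α * μ * (μ - lam) ≤ 0)
    (x : ℝ) : deriv (deriv (expAffine α μ β)) x + lam * deriv (expAffine α μ β) x ≤ 0 := by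
  rw [deriv_deriv_expAffine_add_mul_deriv]
  exact mul_nonpos_of_nonpos_of_nonneg h (exp_pos _).le

theorem expAffine_neg_self_nonneg {a C x : ℝ} (ha : 0 ≤ a) (hC : 0 ≤ C) (hx : 0 ≤ x) :
    0 ≤ expAffine (-a) C a x := by
  have : exp (-C * x) ≤ 1 := exp_le_one_iff.mpr (by nlinarith)
  simp only [expAffine]
  nlinarith

theorem expAffine_sub_exp_nonneg {b c L x : ℝ} (hb : 0 ≤ b) (hc : 0 ≤ c) (hx : x ≤ L) :
    0 ≤ expAffine b c (-(b * exp (-c * L))) x := by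
  have : exp (-c * L) ≤ exp (-c * x) := exp_le_exp.mpr (by nlinarith)
  simp only [expAffine]
  nlinarith

end ExpAffine

theorem stmt_19_general (c C L y a b : ℝ) (hc : 0 < c) (hcC : c ≤ C)
    (hy : y ∈ Set.Ioo 0 L) (ha : 0 < a) (hb : 0 < b)
    (hmatch : a * (1 - Real.exp (-C * y)) = b * (Real.exp (-c * y) - Real.exp (-c * L)))
    (hslope : a * C * Real.exp (-C * y) + b * c * Real.exp (-c * y) = 1)
    (P : ℝ → ℝ)
    (hP : ∀ x : ℝ, P x = if x ≤ y then a * (1 - Real.exp (-C * x))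
      else b * (Real.exp (-c * x) - Real.exp (-c * L))) :
    ContinuousOn P (Set.Icc 0 L) ∧
    P 0 = 0 ∧ P L = 0 ∧
    (∀ x ∈ Set.Icc (0 : ℝ) L, 0 ≤ P x) ∧
    (∀ lam : ℝ → ℝ, ContinuousOn lam (Set.Icc 0 L) →
      (∀ x ∈ Set.Icc (0 : ℝ) L, c ≤ lam x ∧ lam x ≤ C) →
      ∀ x ∈ Set.Icc (0 : ℝ) L, x ≠ y →
        deriv (deriv P) x + lam x * deriv P x ≤ 0) ∧
    derivWithin P (Set.Ici y) y - derivWithin P (Set.Iic y) y = -1 := by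
  have hC : 0 < C := hc.trans_le hcC
  set f := expAffine (-a) C a
  set g := expAffine b c (-(b * exp (-c * L)))
  have hfg : f y = g y := by simp only [f, g, expAffine]; linarith
  obtain rfl : P = fun x => if x ≤ y then f x else g x := by
    funext x; rw [hP]; simp only [f, g, expAffine]; split_ifs <;> ring
  refine ⟨?_, ?_, ?_, ?_, ?_, ?_⟩
  · exact (Continuous.if_le (by fun_prop [expAffine]) (by fun_prop [expAffine])
      continuous_id continuous_const (by rintro x rfl; exact hfg)).continuousOn
  · simp [f, expAffine, hy.1.le]
  · simp [g, expAffine, hy.2]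
  · rintro x ⟨hx0, hxL⟩
    dsimp only
    split_ifs
    · exact expAffine_neg_self_nonneg ha.le hC.le hx0
    · exact expAffine_sub_exp_nonneg hb.le hc.le hxL
  · intro lam _ hlam x hx hxy
    obtain ⟨hclam, hlamC⟩ := hlam x hx
    rcases hxy.lt_or_gt with hlt | hgt
    · have hloc := piecewise_le_eventuallyEq_left (f := f) (g := g) hlt
      rw [hloc.deriv.deriv_eq, hloc.deriv_eq]
      exact deriv_deriv_expAffine_add_mul_deriv_nonpos _ _ _
        (by nlinarith [mul_nonneg (mul_pos ha hC).le (sub_nonneg.mpr hlamC)]) x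
    · have hloc := piecewise_le_eventuallyEq_right (f := f) (g := g) hgt
      rw [hloc.deriv.deriv_eq, hloc.deriv_eq]
      exact deriv_deriv_expAffine_add_mul_deriv_nonpos _ _ _
        (by nlinarith [mul_nonneg (mul_pos hb hc).le (sub_nonneg.mpr hclam)]) x
  · rw [derivWithin_Ici_piecewise_le hfg (hasDerivAt_expAffine _ _ _ y).differentiableAt,
      derivWithin_Iic_piecewise_le (hasDerivAt_expAffine _ _ _ y).differentiableAt,
      deriv_expAffine, deriv_expAffine]
    linarith

/-- Properties of the piecewise weight `P(x) = a(1 - e^{-Cx})` on `[0,y]`,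
`P(x) = b(e^{-cx} - e^{-cL})` on `(y,L]`, where `a, b > 0` solve the matching
system: `P` is continuous on `[0,L]`, vanishes at the endpoints, is nonnegative,
satisfies `P'' + λ P' ≤ 0` away from `y` for every continuous `λ` with
`c ≤ λ ≤ C`, and the one-sided derivatives of `P` jump by `-1` at `y`. -/
theorem stmt_19 (c C L y a b : ℝ) (hc : 0 < c) (hcC : c ≤ C) (hL : 0 < L)
    (hy : y ∈ Set.Ioo 0 L) (ha : 0 < a) (hb : 0 < b)
    (hmatch : a * (1 - Real.exp (-C * y)) = b * (Real.exp (-c * y) - Real.exp (-c * L)))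
    (hslope : a * C * Real.exp (-C * y) + b * c * Real.exp (-c * y) = 1)
    (P : ℝ → ℝ)
    (hP : ∀ x : ℝ, P x = if x ≤ y then a * (1 - Real.exp (-C * x))
      else b * (Real.exp (-c * x) - Real.exp (-c * L))) :
    ContinuousOn P (Set.Icc 0 L) ∧
    P 0 = 0 ∧ P L = 0 ∧
    (∀ x ∈ Set.Icc (0 : ℝ) L, 0 ≤ P x) ∧
    (∀ lam : ℝ → ℝ, ContinuousOn lam (Set.Icc 0 L) →
      (∀ x ∈ Set.Icc (0 : ℝ) L, c ≤ lam x ∧ lam x ≤ C) →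
      ∀ x ∈ Set.Icc (0 : ℝ) L, x ≠ y →
        deriv (deriv P) x + lam x * deriv P x ≤ 0) ∧
    derivWithin P (Set.Ici y) y - derivWithin P (Set.Iic y) y = -1 :=
  stmt_19_general c C L y a b hc hcC hy ha hb hmatch hslope P hP
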